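/- Suppose b satisfies Assumption (A1.2), and let the adaptive timestep function be h(x,μ) = C_h / (1 + |b(x,μ)|‖σ(x,μ)‖ + |b(x,μ)|‖σ⁰(x,μ)‖ + |x|^q)², where C_h > 0 and q is the exponent from Assumption (A1.2). Then there exists a constant C₃ > 0 such that for all x ∈ ℝ^d and all μ ∈ P₂(ℝ^d): |b(x,μ)|² h(x,μ) ≤ C₃(1 + |x|² + W₂²(μ, δ₀)), where δ₀ is the Dirac measure at the origin of ℝ^d. -/
import Mathlib


open MeasureTheory ENNReal
open scoped RealInnerProductSpace

noncomputable section

/-- `Euc d` is the `d`-dimensional Euclidean space `ℝ^d`. -/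
abbrev Euc (d : ℕ) : Type := EuclideanSpace ℝ (Fin d)

/-- `π` is a coupling of the probability measures `μ` and `ν`. -/
def IsCoupling {d : ℕ} (π : Measure (Euc d × Euc d)) (μ ν : Measure (Euc d)) : Prop :=
  IsProbabilityMeasure π ∧ π.map Prod.fst = μ ∧ π.map Prod.snd = ν

/-- `μ ∈ P₂(ℝ^d)`: a Borel probability measure with finite second moment. -/
def MemP2 {d : ℕ} (μ : Measure (Euc d)) : Prop :=
  IsProbabilityMeasure μ ∧ ∫⁻ x, (‖x‖₊ : ℝ≥0∞) ^ 2 ∂μ < ⊤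

/-- The `L²`-Wasserstein distance between `μ` and `ν`. -/
def W2 {d : ℕ} (μ ν : Measure (Euc d)) : ℝ :=
  Real.sqrt (sInf {c : ℝ≥0∞ | ∃ π : Measure (Euc d × Euc d),
      IsCoupling π μ ν ∧ c = ∫⁻ p, (‖p.1 - p.2‖₊ : ℝ≥0∞) ^ 2 ∂π}).toReal

lemma stmt_4_aux (Ch L B t D X W nb : ℝ) (hCh : 0 < Ch) (hB : 0 ≤ B) (hL : 0 ≤ L)
    (ht1 : 1 ≤ t) (htD : t ≤ D) (hX : 0 ≤ X) (hW : 0 ≤ W) (hnb : 0 ≤ nb)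
    (hbb : nb ≤ B + L * (t * X + W)) :
    nb ^ 2 * (Ch / D ^ 2) ≤ 3 * Ch * (B ^ 2 + L ^ 2 + 1) * (1 + X ^ 2 + W ^ 2) := by
  have htpos : (0:ℝ) < t := lt_of_lt_of_le one_pos ht1
  have hDpos : (0:ℝ) < D := lt_of_lt_of_le htpos htD
  have ht2 : t ^ 2 ≤ D ^ 2 := by nlinarith
  have h12 : (1:ℝ) ≤ t ^ 2 := by nlinarith
  have hb2 : nb ^ 2 ≤ 3 * (B ^ 2 + L ^ 2 * t ^ 2 * X ^ 2 + L ^ 2 * W ^ 2) := by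
    have hsq : nb ^ 2 ≤ (B + L * (t * X + W)) ^ 2 := by
      have := pow_le_pow_left₀ hnb hbb 2
      simpa using this
    nlinarith [sq_nonneg (B - L * t * X), sq_nonneg (B - L * W),
      sq_nonneg (L * t * X - L * W), mul_nonneg (mul_nonneg hL htpos.le) hX,
      mul_nonneg hL hW]
  calc nb ^ 2 * (Ch / D ^ 2) = (Ch * nb ^ 2) / D ^ 2 := by ring
    _ ≤ (Ch * nb ^ 2) / t ^ 2 := by
        apply div_le_div_of_nonneg_left (by positivity) (by positivity) ht2
    _ ≤ 3 * Ch * (B ^ 2 + L ^ 2 + 1) * (1 + X ^ 2 + W ^ 2) := by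
        rw [div_le_iff₀ (by positivity)]
        have hC : Ch * nb ^ 2 ≤ 3 * Ch * (B ^ 2 + L ^ 2 * t ^ 2 * X ^ 2 + L ^ 2 * W ^ 2) := by
          have := mul_le_mul_of_nonneg_left hb2 hCh.le
          linarith
        have key : 3 * Ch * (B ^ 2 + L ^ 2 * t ^ 2 * X ^ 2 + L ^ 2 * W ^ 2)
            ≤ 3 * Ch * (B ^ 2 + L ^ 2 + 1) * (1 + X ^ 2 + W ^ 2) * t ^ 2 := by
          have e1 : 0 ≤ Ch * B ^ 2 * (t ^ 2 - 1) :=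
            mul_nonneg (by positivity) (by linarith)
          have e2 : 0 ≤ Ch * B ^ 2 * X ^ 2 * t ^ 2 := by positivity
          have e3 : 0 ≤ Ch * B ^ 2 * W ^ 2 * t ^ 2 := by positivity
          have e4 : 0 ≤ Ch * L ^ 2 * t ^ 2 := by positivity
          have e5 : 0 ≤ Ch * L ^ 2 * W ^ 2 * (t ^ 2 - 1) :=
            mul_nonneg (by positivity) (by linarith)
          have e6 : 0 ≤ Ch * t ^ 2 := by positivity
          have e7 : 0 ≤ Ch * X ^ 2 * t ^ 2 := by positivity
          have e8 : 0 ≤ Ch * W ^ 2 * t ^ 2 := by positivity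
          nlinarith [e1, e2, e3, e4, e5, e6, e7, e8]
        linarith

theorem stmt_4 {d m m₀ : ℕ}
    (b : Euc d → Measure (Euc d) → Euc d)
    (σ : Euc d → Measure (Euc d) → EuclideanSpace ℝ (Fin d × Fin m))
    (σ0 : Euc d → Measure (Euc d) → EuclideanSpace ℝ (Fin d × Fin m₀))
    (L q : ℝ) (hL : 0 < L) (hq : 0 < q)
    (hA12 : ∀ x x' : Euc d, ∀ μ μ' : Measure (Euc d), MemP2 μ → MemP2 μ' →
      ‖b x μ - b x' μ'‖ ≤ L * ((1 + ‖x‖ ^ q + ‖x'‖ ^ q) * ‖x - x'‖ + W2 μ μ'))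
    (Ch : ℝ) (hCh : 0 < Ch)
    (h : Euc d → Measure (Euc d) → ℝ)
    (hdef : ∀ x : Euc d, ∀ μ : Measure (Euc d),
      h x μ = Ch / (1 + ‖b x μ‖ * ‖σ x μ‖ + ‖b x μ‖ * ‖σ0 x μ‖ + ‖x‖ ^ q) ^ 2) :
    ∃ C₃ > 0, ∀ x : Euc d, ∀ μ : Measure (Euc d), MemP2 μ →
      ‖b x μ‖ ^ 2 * h x μ ≤ C₃ * (1 + ‖x‖ ^ 2 + (W2 μ (Measure.dirac 0)) ^ 2) := by
  classical
  have hd0 : MemP2 (Measure.dirac (0 : Euc d)) := by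
    constructor
    · infer_instance
    · rw [lintegral_dirac' _ (by measurability)]
      simp
  set B : ℝ := ‖b 0 (Measure.dirac 0)‖ with hB
  refine ⟨3 * Ch * (B ^ 2 + L ^ 2 + 1), by positivity, ?_⟩
  intro x μ hμ
  have hbb : ‖b x μ‖ ≤ B + L * ((1 + ‖x‖ ^ q) * ‖x‖ + W2 μ (Measure.dirac 0)) := by
    have h0 := hA12 x 0 μ (Measure.dirac 0) hμ hd0
    have h0q : ‖(0 : Euc d)‖ ^ q = 0 := by
      rw [norm_zero]; exact Real.zero_rpow hq.ne'
    rw [h0q, sub_zero] at h0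
    have htri : ‖b x μ‖ ≤ ‖b x μ - b 0 (Measure.dirac 0)‖ + B := by
      simpa [hB] using norm_sub_le_norm_sub_add_norm_sub (b x μ) (b 0 (Measure.dirac 0)) 0
    have heq : (1 + ‖x‖ ^ q + 0) * ‖x‖ = (1 + ‖x‖ ^ q) * ‖x‖ := by ring
    rw [heq] at h0
    linarith
  rw [hdef]
  have htq : (0:ℝ) ≤ ‖x‖ ^ q := Real.rpow_nonneg (norm_nonneg x) q
  apply stmt_4_aux Ch L B (1 + ‖x‖ ^ q) _ ‖x‖ (W2 μ (Measure.dirac 0)) ‖b x μ‖ hCh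
    (norm_nonneg _) hL.le (by linarith) ?_ (norm_nonneg _) (Real.sqrt_nonneg _)
    (norm_nonneg _) (by linarith [hbb])
  have h1 : 0 ≤ ‖b x μ‖ * ‖σ x μ‖ := by positivity
  have h2 : 0 ≤ ‖b x μ‖ * ‖σ0 x μ‖ := by positivity
  linarith
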